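/- Let f : ℝ² → ℝ be smooth with {q, f} = 0 where q(x,ξ) = x² + ξ². Then the formal Taylor series of f at the origin is a formal power series in q, i.e. the Taylor series of f at 0 equals Σ_k a_k (x²+ξ²)^k for some real constants a_k. -/

import Mathlib

open Asymptotics

open Filter in
private lemma littleO_of_deriv' {R : ℝ → ℝ} (hR : Differentiable ℝ R) (h0 : R 0 = 0) {n : ℕ}
    (h : (deriv R) =o[nhds (0:ℝ)] fun t => t ^ n) :
    R =o[nhds (0:ℝ)] fun t => t ^ (n + 1) := by
  rw [isLittleO_iff] at h ⊢
  intro c hc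
  obtain ⟨δ, hδ, hbd⟩ := Metric.eventually_nhds_iff.mp (h hc)
  rw [Metric.eventually_nhds_iff]
  refine ⟨δ, hδ, fun x hx => ?_⟩
  have hxd : |x| < δ := by simpa [Real.dist_eq] using hx
  have key : ‖R x - R 0‖ ≤ (c * |x| ^ n) * ‖x - 0‖ := by
    refine Convex.norm_image_sub_le_of_norm_deriv_le
      (fun t _ => hR t) (fun t ht => ?_) (convex_uIcc 0 x)
      Set.left_mem_uIcc Set.right_mem_uIcc
    have htx : |t| ≤ |x| := by
      rw [Set.uIcc_eq_union, Set.mem_union] at ht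
      rcases ht with h' | h'
      · rcases h' with ⟨h1, h2⟩
        rw [abs_le]
        constructor <;> linarith [abs_nonneg x, neg_abs_le x, le_abs_self x]
      · rcases h' with ⟨h1, h2⟩
        rw [abs_le]
        constructor <;> linarith [abs_nonneg x, neg_abs_le x, le_abs_self x]
    have := hbd (y := t) (by rw [Real.dist_eq, sub_zero]; exact lt_of_le_of_lt htx hxd)
    calc ‖deriv R t‖ ≤ c * ‖t ^ n‖ := this
      _ = c * |t| ^ n := by rw [Real.norm_eq_abs, abs_pow]
      _ ≤ c * |x| ^ n := by
          gcongr
  rw [h0, sub_zero, sub_zero, Real.norm_eq_abs] at key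
  calc ‖R x‖ ≤ c * |x| ^ n * |x| := key
    _ = c * ‖x ^ (n+1)‖ := by rw [Real.norm_eq_abs, abs_pow, pow_succ]; ring

open Filter in
private lemma taylor_littleO' : ∀ (n : ℕ) (g : ℝ → ℝ), ContDiff ℝ (⊤:ℕ∞) g →
    (fun t => g t - ∑ j ∈ Finset.range (n + 1),
        iteratedDeriv j g 0 / (Nat.factorial j) * t ^ j)
      =o[nhds (0:ℝ)] fun t => t ^ n := by
  intro n
  induction n with
  | zero =>
    intro g hg
    have : (fun t : ℝ => g t - ∑ j ∈ Finset.range 1,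
        iteratedDeriv j g 0 / (Nat.factorial j) * t ^ j) = fun t => g t - g 0 := by
      funext t; simp
    rw [this]
    have h2 : (fun t : ℝ => t ^ 0) = fun _ : ℝ => (1:ℝ) := by funext t; simp
    rw [h2, isLittleO_one_iff]
    have := (hg.continuous.tendsto 0).sub (tendsto_const_nhds (x := g 0))
    simpa using this
  | succ n ih =>
    intro g hg
    have hg' : ContDiff ℝ (⊤:ℕ∞) (deriv g) := (contDiff_infty_iff_deriv.mp hg).2
    set c : ℕ → ℝ := fun j => iteratedDeriv j g 0 / (Nat.factorial j) with hc
    set R : ℝ → ℝ := fun t => g t - ∑ j ∈ Finset.range (n + 2), c j * t ^ j with hR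
    have hderiv : ∀ t, HasDerivAt R
        (deriv g t - ∑ i ∈ Finset.range (n + 1),
          iteratedDeriv i (deriv g) 0 / (Nat.factorial i) * t ^ i) t := by
      intro t
      have h1 : HasDerivAt g (deriv g t) t :=
        ((hg.differentiable (by simp)) t).hasDerivAt
      have h2 : HasDerivAt (fun t => ∑ j ∈ Finset.range (n + 2), c j * t ^ j)
          (∑ j ∈ Finset.range (n + 2), c j * ((j : ℝ) * t ^ (j - 1))) t := by
        refine HasDerivAt.fun_sum fun j _ => ?_
        simpa [mul_comm] using (hasDerivAt_pow j t).const_mul (c j)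
      have hsum : (∑ j ∈ Finset.range (n + 2), c j * ((j : ℝ) * t ^ (j - 1)))
          = ∑ i ∈ Finset.range (n + 1),
            iteratedDeriv i (deriv g) 0 / (Nat.factorial i) * t ^ i := by
        rw [Finset.sum_range_succ']
        simp only [Nat.cast_zero, zero_mul, mul_zero, add_zero, Nat.add_sub_cancel]
        refine Finset.sum_congr rfl fun i _ => ?_
        have hiter : iteratedDeriv (i + 1) g 0 = iteratedDeriv i (deriv g) 0 := by
          rw [iteratedDeriv_succ']
        rw [hc]
        simp only [hiter]
        rw [Nat.factorial_succ]
        have h0 : (Nat.factorial i : ℝ) ≠ 0 := Nat.cast_ne_zero.mpr (Nat.factorial_ne_zero i)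
        have h1 : ((i : ℝ) + 1) ≠ 0 := by positivity
        push_cast
        field_simp
      rw [← hsum]
      exact h1.sub h2
    have hR0 : R 0 = 0 := by
      rw [hR]
      simp only
      rw [Finset.sum_eq_single 0]
      · simp [hc]
      · intro j _ hj
        simp [zero_pow hj]
      · intro h; simp at h
    have hdiff : Differentiable ℝ R := fun t => (hderiv t).differentiableAt
    have hderiv_eq : deriv R = fun t => deriv g t - ∑ i ∈ Finset.range (n + 1),
        iteratedDeriv i (deriv g) 0 / (Nat.factorial i) * t ^ i :=
      funext fun t => (hderiv t).deriv
    have hIH := ih (deriv g) hg'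
    have : deriv R =o[nhds (0:ℝ)] fun t => t ^ n := by rw [hderiv_eq]; exact hIH
    exact littleO_of_deriv' hdiff hR0 this

private lemma rot_inv (f : ℝ → ℝ → ℝ)
    (hf : ContDiff ℝ (⊤ : ℕ∞) (fun p : ℝ × ℝ => f p.1 p.2))
    (hbracket : ∀ x ξ : ℝ,
      2 * x * deriv (fun s => f x s) ξ - 2 * ξ * deriv (fun s => f s ξ) x = 0)
    (r θ : ℝ) : f (r * Real.cos θ) (r * Real.sin θ) = f r 0 := by
  have hdf : Differentiable ℝ (fun p : ℝ × ℝ => f p.1 p.2) :=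
    hf.differentiable (by simp)
  have hpart : ∀ x ξ : ℝ,
      deriv (fun s => f x s) ξ = fderiv ℝ (fun p : ℝ × ℝ => f p.1 p.2) (x, ξ) (0, 1) ∧
      deriv (fun s => f s ξ) x = fderiv ℝ (fun p : ℝ × ℝ => f p.1 p.2) (x, ξ) (1, 0) := by
    intro x ξ
    have hL := (hdf (x, ξ)).hasFDerivAt
    constructor
    · have hin : HasDerivAt (fun s : ℝ => ((x, s) : ℝ × ℝ)) ((0 : ℝ), (1 : ℝ)) ξ :=
        (hasDerivAt_const ξ x).prodMk (hasDerivAt_id ξ)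
      exact (hL.comp_hasDerivAt ξ hin).deriv
    · have hin : HasDerivAt (fun s : ℝ => ((s, ξ) : ℝ × ℝ)) ((1 : ℝ), (0 : ℝ)) x :=
        (hasDerivAt_id x).prodMk (hasDerivAt_const x ξ)
      exact (hL.comp_hasDerivAt x hin).deriv
  set F : ℝ → ℝ := fun θ => f (r * Real.cos θ) (r * Real.sin θ) with hF
  have hFderiv : ∀ θ : ℝ, HasDerivAt F 0 θ := by
    intro θ
    have hcos : HasDerivAt (fun θ : ℝ => r * Real.cos θ) (r * (-Real.sin θ)) θ :=
      (Real.hasDerivAt_cos θ).const_mul r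
    have hsin : HasDerivAt (fun θ : ℝ => r * Real.sin θ) (r * Real.cos θ) θ :=
      (Real.hasDerivAt_sin θ).const_mul r
    have hφ : HasDerivAt (fun θ : ℝ => ((r * Real.cos θ, r * Real.sin θ) : ℝ × ℝ))
        ((r * (-Real.sin θ), r * Real.cos θ)) θ := hcos.prodMk hsin
    set x := r * Real.cos θ
    set ξ := r * Real.sin θ
    set L := fderiv ℝ (fun p : ℝ × ℝ => f p.1 p.2) (x, ξ) with hLdef
    have hL := (hdf (x, ξ)).hasFDerivAt
    have hcomp : HasDerivAt F (L (r * (-Real.sin θ), r * Real.cos θ)) θ :=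
      by have := hL.comp_hasDerivAt θ hφ; exact this
    have hdecomp : L (r * (-Real.sin θ), r * Real.cos θ)
        = (r * (-Real.sin θ)) * L (1, 0) + (r * Real.cos θ) * L (0, 1) := by
      have : ((r * (-Real.sin θ), r * Real.cos θ) : ℝ × ℝ)
          = (r * (-Real.sin θ)) • ((1:ℝ), (0:ℝ)) + (r * Real.cos θ) • ((0:ℝ), (1:ℝ)) := by
        simp [Prod.ext_iff]
      rw [this, map_add, map_smul, map_smul]
      simp [smul_eq_mul]
    have hb := hbracket x ξ
    rw [(hpart x ξ).1, (hpart x ξ).2, ← hLdef] at hb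
    have : L (r * (-Real.sin θ), r * Real.cos θ) = 0 := by
      rw [hdecomp]
      have hx : r * (-Real.sin θ) = -ξ := by ring
      have hξ : r * Real.cos θ = x := by ring
      rw [hx, hξ]
      linarith
    rwa [this] at hcomp
  have hconst : F θ = F 0 :=
    is_const_of_deriv_eq_zero (fun t => (hFderiv t).differentiableAt)
      (fun t => (hFderiv t).deriv) θ 0
  simpa [hF] using hconst

private lemma sum_even' (c : ℕ → ℝ) (hodd : ∀ j, Odd j → c j = 0) : ∀ (N : ℕ) (t : ℝ),
    ∑ j ∈ Finset.range (2 * N + 2), c j * t ^ j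
      = ∑ k ∈ Finset.range (N + 1), c (2 * k) * (t ^ 2) ^ k := by
  intro N
  induction N with
  | zero =>
    intro t
    rw [show 2 * 0 + 2 = 2 by rfl, Finset.sum_range_succ, Finset.sum_range_succ]
    simp [hodd 1 ⟨0, rfl⟩]
  | succ N ih =>
    intro t
    rw [show 2 * (N + 1) + 2 = (2 * N + 2) + 1 + 1 by ring, Finset.sum_range_succ,
      Finset.sum_range_succ, ih t, Finset.sum_range_succ]
    rw [hodd (2 * N + 2 + 1) ⟨N + 1, by ring⟩]
    rw [Finset.sum_range_succ (n := N + 1), Finset.sum_range_succ (n := N)]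
    have h1 : (t ^ 2) ^ (N + 1) = t ^ (2 * N + 2) := by rw [← pow_mul]; ring_nf
    have h2 : 2 * (N + 1) = 2 * N + 2 := by ring
    rw [h1, h2]
    ring

/-- a smooth `f : ℝ² → ℝ` Poisson-commuting with `q(x,ξ) = x² + ξ²` has
formal Taylor series at the origin which is a formal power series in `q`: there are
constants `a k` such that for every `N`, `f − Σ_{k ≤ N} a k · q^k = o(‖(x,ξ)‖^{2N+1})`
at the origin. -/
theorem taylor_series_in_q
    (f : ℝ → ℝ → ℝ)
    (hf : ContDiff ℝ (⊤ : ℕ∞) (fun p : ℝ × ℝ => f p.1 p.2))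
    (hbracket : ∀ x ξ : ℝ,
      2 * x * deriv (fun s => f x s) ξ - 2 * ξ * deriv (fun s => f s ξ) x = 0) :
    ∃ a : ℕ → ℝ, ∀ N : ℕ,
      (fun p : ℝ × ℝ =>
          f p.1 p.2 - ∑ k ∈ Finset.range (N + 1), a k * (p.1 ^ 2 + p.2 ^ 2) ^ k)
        =o[nhds (0 : ℝ × ℝ)] fun p : ℝ × ℝ => ‖p‖ ^ (2 * N + 1) := by
  classical
  set g : ℝ → ℝ := fun r => f r 0 with hgdef
  have hsm : ContDiff ℝ (⊤:ℕ∞) (fun p : ℝ × ℝ => f p.1 p.2) := hf.of_le (by simp)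
  have hg : ContDiff ℝ (⊤:ℕ∞) g := hsm.comp (contDiff_id.prodMk contDiff_const)
  -- polar representation
  have hpolar : ∀ x ξ : ℝ, f x ξ = g (Real.sqrt (x ^ 2 + ξ ^ 2)) := by
    intro x ξ
    set z : ℂ := ⟨x, ξ⟩ with hz
    have habs : ‖z‖ = Real.sqrt (x ^ 2 + ξ ^ 2) := by
      rw [Complex.norm_def, Complex.normSq_mk]; ring_nf
    have h := Complex.norm_mul_cos_add_sin_mul_I z
    have hre : (‖z‖) * Real.cos (Complex.arg z) = x := by
      have := congrArg Complex.re h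
      rw [Complex.norm_mul_cos_arg]
    have him : (‖z‖) * Real.sin (Complex.arg z) = ξ := by
      have := congrArg Complex.im h
      rw [Complex.norm_mul_sin_arg]
    have step1 : f ((‖z‖) * Real.cos (Complex.arg z))
        ((‖z‖) * Real.sin (Complex.arg z)) = f (‖z‖) 0 :=
      rot_inv f hf hbracket _ _
    rw [hre, him] at step1
    rw [step1, hgdef, habs]
  -- g is even
  have heven : ∀ r : ℝ, g (-r) = g r := by
    intro r
    have := rot_inv f hf hbracket r Real.pi
    simpa [Real.cos_pi, Real.sin_pi, hgdef] using this
  -- odd iterated derivatives of g vanish at 0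
  have hoddD : ∀ j, Odd j → iteratedDeriv j g 0 = 0 := by
    intro j hj
    have hfe : (fun x => g (-x)) = g := funext fun x => heven x
    have h := iteratedDeriv_comp_neg j g 0
    rw [hfe, neg_zero, Odd.neg_one_pow hj] at h
    have : iteratedDeriv j g 0 = -iteratedDeriv j g 0 := by
      simpa using h
    linarith
  refine ⟨fun k => iteratedDeriv (2 * k) g 0 / (Nat.factorial (2 * k)), fun N => ?_⟩
  set c : ℕ → ℝ := fun j => iteratedDeriv j g 0 / (Nat.factorial j) with hcdef
  have hcodd : ∀ j, Odd j → c j = 0 := by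
    intro j hj
    rw [hcdef]
    simp [hoddD j hj]
  have hT := taylor_littleO' (2 * N + 1) g hg
  set ρ : ℝ × ℝ → ℝ := fun p => Real.sqrt (p.1 ^ 2 + p.2 ^ 2) with hρdef
  have hρcont : Continuous ρ := by
    exact Real.continuous_sqrt.comp (((continuous_fst.pow 2)).add ((continuous_snd.pow 2)))
  have hρ0 : Filter.Tendsto ρ (nhds 0) (nhds 0) := by
    have : ρ 0 = 0 := by simp [hρdef]
    exact hρcont.tendsto' 0 0 this
  have hcomp := hT.comp_tendsto hρ0
  -- equality of the goal function with the composed remainder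
  have hfun : (fun p : ℝ × ℝ =>
      f p.1 p.2 - ∑ k ∈ Finset.range (N + 1),
        (iteratedDeriv (2 * k) g 0 / (Nat.factorial (2 * k))) * (p.1 ^ 2 + p.2 ^ 2) ^ k)
      = (fun t => g t - ∑ j ∈ Finset.range (2 * N + 1 + 1),
          iteratedDeriv j g 0 / (Nat.factorial j) * t ^ j) ∘ ρ := by
    funext p
    have hsq : (ρ p) ^ 2 = p.1 ^ 2 + p.2 ^ 2 := by
      rw [hρdef]
      exact Real.sq_sqrt (by positivity)
    have hsum := sum_even' c hcodd N (ρ p)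
    simp only [Function.comp_apply]
    rw [show 2 * N + 1 + 1 = 2 * N + 2 from rfl, hsum, hpolar p.1 p.2, hsq]
  rw [hfun]
  -- compare ρ^(2N+1) with ‖p‖^(2N+1)
  have hO : (fun p : ℝ × ℝ => (ρ p) ^ (2 * N + 1))
      =O[nhds (0 : ℝ × ℝ)] fun p : ℝ × ℝ => ‖p‖ ^ (2 * N + 1) := by
    refine IsBigO.of_bound ((Real.sqrt 2) ^ (2 * N + 1)) (Filter.Eventually.of_forall fun p => ?_)
    have hle : ρ p ≤ Real.sqrt 2 * ‖p‖ := by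
      have h1 : p.1 ^ 2 + p.2 ^ 2 ≤ 2 * ‖p‖ ^ 2 := by
        have ha : |p.1| ≤ ‖p‖ := by
          simpa [Real.norm_eq_abs] using norm_fst_le p
        have hb : |p.2| ≤ ‖p‖ := by
          simpa [Real.norm_eq_abs] using norm_snd_le p
        have ha2 : p.1 ^ 2 ≤ ‖p‖ ^ 2 := by
          rw [← sq_abs]; exact pow_le_pow_left₀ (abs_nonneg _) ha 2
        have hb2 : p.2 ^ 2 ≤ ‖p‖ ^ 2 := by
          rw [← sq_abs]; exact pow_le_pow_left₀ (abs_nonneg _) hb 2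
        linarith
      calc ρ p ≤ Real.sqrt (2 * ‖p‖ ^ 2) := Real.sqrt_le_sqrt h1
        _ = Real.sqrt 2 * ‖p‖ := by
            rw [Real.sqrt_mul (by norm_num), Real.sqrt_sq (norm_nonneg p)]
    have hρnn : 0 ≤ ρ p := Real.sqrt_nonneg _
    calc ‖(ρ p) ^ (2 * N + 1)‖ = (ρ p) ^ (2 * N + 1) := by
          rw [Real.norm_eq_abs, abs_pow, abs_of_nonneg hρnn]
      _ ≤ (Real.sqrt 2 * ‖p‖) ^ (2 * N + 1) := pow_le_pow_left₀ hρnn hle _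
      _ = (Real.sqrt 2) ^ (2 * N + 1) * ‖p‖ ^ (2 * N + 1) := mul_pow _ _ _
      _ = (Real.sqrt 2) ^ (2 * N + 1) * ‖(‖p‖ ^ (2 * N + 1))‖ := by
          rw [Real.norm_eq_abs, abs_of_nonneg (by positivity)]
  exact hcomp.trans_isBigO hO
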